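/- arXiv:2011.03867 — 4 statements merged into one kernel-verified Lean document; each statement's English description precedes it below -/
import Mathlib

section
/- Let (X,d_X) and (Y,d_Y) be finite metric spaces. Then X and Y are isometric (there exists a bijection f : X → Y with d_Y(f x, f x') = d_X(x, x') for all x, x' ∈ X) if and only if the metric isometry game Isom(X,Y) has a perfect deterministic strategy, i.e., there exist functions h, k : X ⊔ Y → X ⊔ Y such that W(v, w, h(v), k(w)) holds for every pair of inputs v, w ∈ X ⊔ Y. -/
open scoped BigOperators

/-- The distance between two points of the disjoint union `X ⊕ Y` lying in the same
component (junk value `0` for mixed pairs). -/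
noncomputable def pairDist {X Y : Type} [MetricSpace X] [MetricSpace Y] :
    X ⊕ Y → X ⊕ Y → ℝ
  | Sum.inl x, Sum.inl x' => dist x x'
  | Sum.inr y, Sum.inr y' => dist y y'
  | _, _ => 0

/-- The rule predicate `W(v,w,a,b)` of the metric isometry game `Isom(X,Y)`:
(i) `v` and `a` lie in different components of `X ⊕ Y`; (ii) `w` and `b` lie in
different components; (iii) if `v` and `w` lie in the same component then the distance
between `a` and `b` equals the distance between `v` and `w`; (iv) if `v` and `w` lie in
different components then `v = b` iff `w = a`. -/
noncomputable def isomRule {X Y : Type} [MetricSpace X] [MetricSpace Y]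
    (v w a b : X ⊕ Y) : Prop :=
  v.isLeft ≠ a.isLeft ∧ w.isLeft ≠ b.isLeft ∧
  (v.isLeft = w.isLeft → pairDist a b = pairDist v w) ∧
  (v.isLeft ≠ w.isLeft → (v = b ↔ w = a))

/-- Two finite metric spaces `X` and `Y` are isometric if and only if the metric
isometry game `Isom(X,Y)` has a perfect deterministic strategy. -/
theorem isometric_iff_perfect_deterministic_strategy
    (X Y : Type) [Fintype X] [Fintype Y] [MetricSpace X] [MetricSpace Y] :
    (∃ f : X → Y, Function.Bijective f ∧ ∀ x x' : X, dist (f x) (f x') = dist x x') ↔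
    (∃ h k : X ⊕ Y → X ⊕ Y, ∀ v w : X ⊕ Y, isomRule v w (h v) (k w)) := by
  constructor
  · rintro ⟨f, hf, hiso⟩
    let e := Equiv.ofBijective f hf
    have hs : ∀ y y' : Y, dist (e.symm y) (e.symm y') = dist y y' := by
      intro y y'
      have := hiso (e.symm y) (e.symm y')
      simpa [e, Equiv.ofBijective_apply_symm_apply] using this.symm
    refine ⟨Sum.elim (fun x => Sum.inr (e x)) (fun y => Sum.inl (e.symm y)),
            Sum.elim (fun x => Sum.inr (e x)) (fun y => Sum.inl (e.symm y)), ?_⟩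
    rintro (x | y) (x' | y') <;>
      simp [isomRule, pairDist, hiso, hs, e, Equiv.ofBijective_apply, Equiv.eq_symm_apply, Equiv.symm_apply_eq,
        eq_comm]
  · rintro ⟨h, k, hw⟩
    have hR : ∀ x : X, (h (Sum.inl x)).isRight := by
      intro x
      have := (hw (Sum.inl x) (Sum.inl x)).1
      cases hx : h (Sum.inl x) <;> simp_all
    have kR : ∀ x : X, (k (Sum.inl x)).isRight := by
      intro x
      have := (hw (Sum.inl x) (Sum.inl x)).2.1
      cases hx : k (Sum.inl x) <;> simp_all
    have kL : ∀ y : Y, (k (Sum.inr y)).isLeft := by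
      intro y
      have := (hw (Sum.inr y) (Sum.inr y)).2.1
      cases hx : k (Sum.inr y) <;> simp_all
    set f : X → Y := fun x => (h (Sum.inl x)).getRight (hR x) with hfdef
    set f' : X → Y := fun x => (k (Sum.inl x)).getRight (kR x) with hf'def
    set g : Y → X := fun y => (k (Sum.inr y)).getLeft (kL y) with hgdef
    have hfe : ∀ x : X, h (Sum.inl x) = Sum.inr (f x) := fun x =>
      (Sum.inr_getRight _ (hR x)).symm
    have hf'e : ∀ x : X, k (Sum.inl x) = Sum.inr (f' x) := fun x =>
      (Sum.inr_getRight _ (kR x)).symm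
    have hge : ∀ y : Y, k (Sum.inr y) = Sum.inl (g y) := fun y =>
      (Sum.inl_getLeft _ (kL y)).symm
    have hdist : ∀ x x' : X, dist (f x) (f' x') = dist x x' := by
      intro x x'
      have := (hw (Sum.inl x) (Sum.inl x')).2.2.1 rfl
      rw [hfe, hf'e] at this
      simpa [pairDist] using this
    have hff' : ∀ x : X, f' x = f x := by
      intro x
      have := hdist x x
      simp at this
      exact this.symm
    have hiso : ∀ x x' : X, dist (f x) (f x') = dist x x' := by
      intro x x'
      have := hdist x x'
      rwa [hff'] at this
    have hinj : Function.Injective f := by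
      intro a b hab
      have := hiso a b
      rw [hab] at this
      simp at this
      exact this
    have hsurj : Function.Surjective f := by
      intro y
      have hiv := (hw (Sum.inl (g y)) (Sum.inr y)).2.2.2 (by simp)
      rw [hge, hfe] at hiv
      have : Sum.inr y = Sum.inr (f (g y)) := hiv.mp rfl
      exact ⟨g y, (Sum.inr.injEq _ _ ▸ this).symm⟩
    exact ⟨f, ⟨hinj, hsurj⟩, hiso⟩
end

section
/- Let (X,d_X) and (Y,d_Y) be finite metric spaces, Z = X ⊔ Y, and let e : Z × Z → A satisfy the defining relations of the game *-algebra A(Isom(X,Y)). Then for every x ∈ X and y ∈ Y one has e(x, y) = e(y, x), where on the left x is the input and y the output and on the right the roles are reversed. -/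
open scoped BigOperators

/-- The defining relations of the game `*`-algebra `A(Isom(X,Y))` for a family
`e : Z × Z → A`, `Z = X ⊕ Y`, with values in a unital `*`-algebra `A` over `ℝ`:
each `e v a` is a self-adjoint idempotent, each row sums to `1`, and
`e v a * e w b = 0` whenever the rule `W(v,w,a,b)` fails. -/
def GameRel {X Y : Type} [Fintype X] [Fintype Y] [MetricSpace X] [MetricSpace Y]
    {A : Type} [Ring A] [Algebra ℝ A] [StarRing A]
    (e : X ⊕ Y → X ⊕ Y → A) : Prop :=
  (∀ v a : X ⊕ Y, star (e v a) = e v a) ∧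
  (∀ v a : X ⊕ Y, e v a * e v a = e v a) ∧
  (∀ v : X ⊕ Y, ∑ a : X ⊕ Y, e v a = 1) ∧
  (∀ v w a b : X ⊕ Y, ¬ isomRule v w a b → e v a * e w b = 0)

/-- In the game `*`-algebra of `Isom(X,Y)`, for every `x ∈ X` and `y ∈ Y` one has
`e (x, y) = e (y, x)`. -/
theorem gameRel_symm
    (X Y : Type) [Fintype X] [Fintype Y] [MetricSpace X] [MetricSpace Y]
    (A : Type) [Ring A] [Algebra ℝ A] [StarRing A]
    (e : X ⊕ Y → X ⊕ Y → A) (he : GameRel e) :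
    ∀ (x : X) (y : Y), e (Sum.inl x) (Sum.inr y) = e (Sum.inr y) (Sum.inl x) := by
  obtain ⟨hstar, hidem, hsum, horth⟩ := he
  have hzero : ∀ v a : X ⊕ Y, v.isLeft = a.isLeft → e v a = 0 := by
    intro v a h
    have h0 : e v a * e v a = 0 := horth v v a a (fun hr => hr.1 h)
    rw [hidem v a] at h0
    exact h0
  intro x y
  have key1 : e (Sum.inl x) (Sum.inr y) =
      e (Sum.inl x) (Sum.inr y) * e (Sum.inr y) (Sum.inl x) := by
    calc e (Sum.inl x) (Sum.inr y)
        = e (Sum.inl x) (Sum.inr y) * ∑ b : X ⊕ Y, e (Sum.inr y) b := by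
          rw [hsum, mul_one]
      _ = ∑ b : X ⊕ Y, e (Sum.inl x) (Sum.inr y) * e (Sum.inr y) b := by
          rw [Finset.mul_sum]
      _ = e (Sum.inl x) (Sum.inr y) * e (Sum.inr y) (Sum.inl x) := by
          refine Finset.sum_eq_single (Sum.inl x) ?_ ?_
          · intro b _ hb
            match b with
            | Sum.inl x' =>
              apply horth
              intro hr
              have h4 := (hr.2.2.2 (by simp)).mpr rfl
              exact hb (h4.symm)
            | Sum.inr y' =>
              rw [hzero (Sum.inr y) (Sum.inr y') rfl, mul_zero]
          · intro h; exact absurd (Finset.mem_univ _) h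
  have key2 : e (Sum.inr y) (Sum.inl x) =
      e (Sum.inl x) (Sum.inr y) * e (Sum.inr y) (Sum.inl x) := by
    calc e (Sum.inr y) (Sum.inl x)
        = (∑ a : X ⊕ Y, e (Sum.inl x) a) * e (Sum.inr y) (Sum.inl x) := by
          rw [hsum, one_mul]
      _ = ∑ a : X ⊕ Y, e (Sum.inl x) a * e (Sum.inr y) (Sum.inl x) := by
          rw [Finset.sum_mul]
      _ = e (Sum.inl x) (Sum.inr y) * e (Sum.inr y) (Sum.inl x) := by
          refine Finset.sum_eq_single (Sum.inr y) ?_ ?_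
          · intro a _ ha
            match a with
            | Sum.inl x' =>
              rw [hzero (Sum.inl x) (Sum.inl x') rfl, zero_mul]
            | Sum.inr y' =>
              apply horth
              intro hr
              have h4 := (hr.2.2.2 (by simp)).mp rfl
              exact ha (h4.symm)
          · intro h; exact absurd (Finset.mem_univ _) h
  exact key1.trans key2.symm
end

section
/- Let (X,d_X) and (Y,d_Y) be finite metric spaces, Z = X ⊔ Y, and let e : Z × Z → A satisfy the defining relations of the game *-algebra A(Isom(X,Y)). Then for every x ∈ X and y ∈ Y, ∑_{x'∈X} d_X(x,x') • e(x', y) = ∑_{y'∈Y} d_Y(y',y) • e(x, y'), where t • a denotes the scalar action of the real number t on a ∈ A. -/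
open scoped BigOperators

/-- In the game `*`-algebra of `Isom(X,Y)`, the intertwining relation with the distance
matrices holds: for every `x ∈ X` and `y ∈ Y`,
`∑_{x' ∈ X} d_X(x,x') • e (x', y) = ∑_{y' ∈ Y} d_Y(y',y) • e (x, y')`. -/
theorem gameRel_distance_intertwining
    (X Y : Type) [Fintype X] [Fintype Y] [MetricSpace X] [MetricSpace Y]
    (A : Type) [Ring A] [Algebra ℝ A] [StarRing A]
    (e : X ⊕ Y → X ⊕ Y → A) (he : GameRel e) :
    ∀ (x : X) (y : Y),
      ∑ x' : X, dist x x' • e (Sum.inl x') (Sum.inr y)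
        = ∑ y' : Y, dist y' y • e (Sum.inl x) (Sum.inr y') := by
  obtain ⟨hstar, hidem, hsum, hzero⟩ := he
  have hLL : ∀ x x' : X, e (Sum.inl x) (Sum.inl x') = 0 := by
    intro x x'
    have h := hzero (Sum.inl x) (Sum.inl x) (Sum.inl x') (Sum.inl x')
      (by simp [isomRule])
    rwa [hidem] at h
  have hRR : ∀ y y' : Y, e (Sum.inr y) (Sum.inr y') = 0 := by
    intro y y'
    have h := hzero (Sum.inr y) (Sum.inr y) (Sum.inr y') (Sum.inr y')
      (by simp [isomRule])
    rwa [hidem] at h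
  have hsumX : ∀ x : X, ∑ y' : Y, e (Sum.inl x) (Sum.inr y') = 1 := by
    intro x
    have h := hsum (Sum.inl x)
    rw [Fintype.sum_sum_type] at h
    simpa [hLL] using h
  have hsumY : ∀ y : Y, ∑ x' : X, e (Sum.inr y) (Sum.inl x') = 1 := by
    intro y
    have h := hsum (Sum.inr y)
    rw [Fintype.sum_sum_type] at h
    simpa [hRR] using h
  have hsymm : ∀ (x : X) (y : Y),
      e (Sum.inr y) (Sum.inl x) = e (Sum.inl x) (Sum.inr y) := by
    intro x y
    have hpq : e (Sum.inl x) (Sum.inr y) * e (Sum.inr y) (Sum.inl x)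
        = e (Sum.inl x) (Sum.inr y) := by
      have h1 : ∑ x' : X, e (Sum.inl x) (Sum.inr y) * e (Sum.inr y) (Sum.inl x')
          = e (Sum.inl x) (Sum.inr y) := by
        rw [← Finset.mul_sum, hsumY y, mul_one]
      rw [Finset.sum_eq_single x] at h1
      · exact h1
      · intro x' _ hx'
        apply hzero
        intro hr
        obtain ⟨-, -, -, h4⟩ := hr
        have := (h4 (by simp)).mpr rfl
        exact hx' (by injection this.symm)
      · intro h; exact absurd (Finset.mem_univ x) h
    have hqp : e (Sum.inr y) (Sum.inl x) * e (Sum.inl x) (Sum.inr y)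
        = e (Sum.inr y) (Sum.inl x) := by
      have h1 : ∑ y' : Y, e (Sum.inr y) (Sum.inl x) * e (Sum.inl x) (Sum.inr y')
          = e (Sum.inr y) (Sum.inl x) := by
        rw [← Finset.mul_sum, hsumX x, mul_one]
      rw [Finset.sum_eq_single y] at h1
      · exact h1
      · intro y' _ hy'
        apply hzero
        intro hr
        obtain ⟨-, -, -, h4⟩ := hr
        have := (h4 (by simp)).mpr rfl
        exact hy' (by injection this.symm)
      · intro h; exact absurd (Finset.mem_univ y) h
    calc e (Sum.inr y) (Sum.inl x)
        = star (e (Sum.inr y) (Sum.inl x)) := (hstar _ _).symm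
      _ = star (e (Sum.inr y) (Sum.inl x) * e (Sum.inl x) (Sum.inr y)) := by rw [hqp]
      _ = star (e (Sum.inl x) (Sum.inr y)) * star (e (Sum.inr y) (Sum.inl x)) := by
          rw [star_mul]
      _ = e (Sum.inl x) (Sum.inr y) * e (Sum.inr y) (Sum.inl x) := by
          rw [hstar, hstar]
      _ = e (Sum.inl x) (Sum.inr y) := hpq
  intro x y
  have key : ∀ (x' : X) (y' : Y),
      dist x x' • (e (Sum.inl x') (Sum.inr y) * e (Sum.inl x) (Sum.inr y'))
      = dist y' y • (e (Sum.inl x') (Sum.inr y) * e (Sum.inl x) (Sum.inr y')) := by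
    intro x' y'
    by_cases h : isomRule (Sum.inl x') (Sum.inl x) (Sum.inr y) (Sum.inr y')
    · obtain ⟨-, -, h3, -⟩ := h
      have hd := h3 rfl
      simp only [pairDist] at hd
      rw [dist_comm x x', dist_comm y' y, hd]
    · rw [hzero _ _ _ _ h, smul_zero, smul_zero]
  calc ∑ x' : X, dist x x' • e (Sum.inl x') (Sum.inr y)
      = ∑ x' : X, ∑ y' : Y,
          dist x x' • (e (Sum.inl x') (Sum.inr y) * e (Sum.inl x) (Sum.inr y')) := by
        refine Finset.sum_congr rfl fun x' _ => ?_
        rw [← Finset.smul_sum, ← Finset.mul_sum, hsumX x, mul_one]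
    _ = ∑ x' : X, ∑ y' : Y,
          dist y' y • (e (Sum.inl x') (Sum.inr y) * e (Sum.inl x) (Sum.inr y')) :=
        Finset.sum_congr rfl fun x' _ => Finset.sum_congr rfl fun y' _ => key x' y'
    _ = ∑ y' : Y, dist y' y • e (Sum.inl x) (Sum.inr y') := by
        rw [Finset.sum_comm]
        refine Finset.sum_congr rfl fun y' _ => ?_
        rw [← Finset.smul_sum, ← Finset.sum_mul]
        have hcol : ∑ x' : X, e (Sum.inl x') (Sum.inr y) = 1 := by
          rw [← hsumY y]
          exact Finset.sum_congr rfl fun x' _ => (hsymm x' y).symm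
        rw [hcol, one_mul]
end

section
/- Let (X,d_X) and (Y,d_Y) be finite metric spaces, Z = X ⊔ Y, and let e : Z × Z → A satisfy the defining relations of the game *-algebra A(Isom(X,Y)). Form the matrix U ∈ M_{X×Y}(A) with entries U_{x,y} = e(x,y). Then U is a unitary: U · U* = 1 in M_{X×X}(A) and U* · U = 1 in M_{Y×Y}(A), where U* denotes the conjugate transpose (U*)_{y,x} = star(U_{x,y}). -/
open scoped BigOperators

open Matrix in
/-- In the game `*`-algebra of `Isom(X,Y)`, the matrix `U = [e (x, y)]_{x ∈ X, y ∈ Y}`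
is a unitary: `U · U* = 1` and `U* · U = 1`. -/
theorem gameRel_matrix_unitary
    (X Y : Type) [Fintype X] [Fintype Y] [MetricSpace X] [MetricSpace Y]
    [DecidableEq X] [DecidableEq Y]
    (A : Type) [Ring A] [Algebra ℝ A] [StarRing A]
    (e : X ⊕ Y → X ⊕ Y → A) (he : GameRel e) :
    (Matrix.of (fun (x : X) (y : Y) => e (Sum.inl x) (Sum.inr y)) *
        (Matrix.of (fun (x : X) (y : Y) => e (Sum.inl x) (Sum.inr y)))ᴴ = 1) ∧
    ((Matrix.of (fun (x : X) (y : Y) => e (Sum.inl x) (Sum.inr y)))ᴴ *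
        Matrix.of (fun (x : X) (y : Y) => e (Sum.inl x) (Sum.inr y)) = 1) := by

  obtain ⟨hstar, hidem, hsum, hrule⟩ := he
  -- e v a = 0 when v and a lie in the same component
  have hzero : ∀ v a : X ⊕ Y, v.isLeft = a.isLeft → e v a = 0 := by
    intro v a h
    have h0 : ¬ isomRule v v a a := by
      intro hr
      exact hr.1 h
    have := hrule v v a a h0
    rwa [hidem] at this
  -- orthogonality within a row
  have horth : ∀ v a b : X ⊕ Y, a ≠ b → e v a * e v b = 0 := by
    intro v a b hab
    apply hrule
    rintro ⟨h1, h2, h3, -⟩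
    have hvv : pairDist v v = 0 := by cases v <;> simp [pairDist]
    have hd : pairDist a b = 0 := by rw [h3 rfl, hvv]
    apply hab
    rcases a with xa | ya <;> rcases b with xb | yb
    · simp only [pairDist] at hd; rw [dist_eq_zero.mp hd]
    · exfalso; revert h1 h2; cases v <;> simp
    · exfalso; revert h1 h2; cases v <;> simp
    · simp only [pairDist] at hd; rw [dist_eq_zero.mp hd]
  -- row sums restricted to the opposite component
  have hrowL : ∀ x : X, ∑ y : Y, e (Sum.inl x) (Sum.inr y) = 1 := by
    intro x
    have := hsum (Sum.inl x)
    rw [Fintype.sum_sum_type] at this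
    have hz : ∑ x' : X, e (Sum.inl x) (Sum.inl x') = 0 :=
      Finset.sum_eq_zero fun x' _ => hzero _ _ rfl
    rwa [hz, zero_add] at this
  have hrowR : ∀ y : Y, ∑ x : X, e (Sum.inr y) (Sum.inl x) = 1 := by
    intro y
    have := hsum (Sum.inr y)
    rw [Fintype.sum_sum_type] at this
    have hz : ∑ y' : Y, e (Sum.inr y) (Sum.inr y') = 0 :=
      Finset.sum_eq_zero fun y' _ => hzero _ _ rfl
    rwa [hz, add_zero] at this
  -- the swap identity e (inl x) (inr y) = e (inr y) (inl x)
  have hswap : ∀ (x : X) (y : Y),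
      e (Sum.inl x) (Sum.inr y) = e (Sum.inr y) (Sum.inl x) := by
    intro x y
    have h1 : e (Sum.inr y) (Sum.inl x)
        = e (Sum.inl x) (Sum.inr y) * e (Sum.inr y) (Sum.inl x) := by
      have hs : (∑ a : X ⊕ Y, e (Sum.inl x) a) * e (Sum.inr y) (Sum.inl x)
          = e (Sum.inr y) (Sum.inl x) := by rw [hsum, one_mul]
      rw [Finset.sum_mul] at hs
      have hsingle : ∑ a : X ⊕ Y, e (Sum.inl x) a * e (Sum.inr y) (Sum.inl x)
          = e (Sum.inl x) (Sum.inr y) * e (Sum.inr y) (Sum.inl x) := by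
        apply Finset.sum_eq_single (Sum.inr y)
        · intro a _ ha
          rcases a with x' | y'
          · rw [hzero (Sum.inl x) (Sum.inl x') rfl, zero_mul]
          · apply hrule
            rintro ⟨-, -, -, h4⟩
            have hy : y ≠ y' := fun h => ha (by rw [h])
            have := (h4 (by simp)).1 rfl
            exact hy (by injection this)
        · intro h; exact absurd (Finset.mem_univ _) h
      rw [← hsingle, hs]
    have h2 : e (Sum.inl x) (Sum.inr y)
        = e (Sum.inl x) (Sum.inr y) * e (Sum.inr y) (Sum.inl x) := by
      have hs : e (Sum.inl x) (Sum.inr y) * (∑ b : X ⊕ Y, e (Sum.inr y) b)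
          = e (Sum.inl x) (Sum.inr y) := by rw [hsum, mul_one]
      rw [Finset.mul_sum] at hs
      have hsingle : ∑ b : X ⊕ Y, e (Sum.inl x) (Sum.inr y) * e (Sum.inr y) b
          = e (Sum.inl x) (Sum.inr y) * e (Sum.inr y) (Sum.inl x) := by
        apply Finset.sum_eq_single (Sum.inl x)
        · intro b _ hb
          rcases b with x' | y'
          · apply hrule
            rintro ⟨-, -, -, h4⟩
            have hx : x ≠ x' := fun h => hb (by rw [h])
            have := (h4 (by simp)).2 rfl
            exact hx (by injection this)
          · rw [hzero (Sum.inr y) (Sum.inr y') rfl, mul_zero]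
        · intro h; exact absurd (Finset.mem_univ _) h
      rw [← hsingle, hs]
    rw [h2, ← h1]
  constructor
  · ext x x'
    rw [Matrix.mul_apply]
    simp only [Matrix.conjTranspose_apply, Matrix.of_apply, hstar]
    by_cases hxx : x = x'
    · subst hxx
      have : ∀ y : Y, e (Sum.inl x) (Sum.inr y) * e (Sum.inl x) (Sum.inr y)
          = e (Sum.inl x) (Sum.inr y) := fun y => hidem _ _
      rw [Finset.sum_congr rfl fun y _ => this y, hrowL, Matrix.one_apply_eq]
    · rw [Matrix.one_apply_ne hxx]
      apply Finset.sum_eq_zero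
      intro y _
      apply hrule
      rintro ⟨-, -, h3, -⟩
      have := h3 (by simp)
      simp only [pairDist] at this
      rw [dist_self] at this
      exact hxx (dist_eq_zero.mp this.symm)
  · ext y y'
    rw [Matrix.mul_apply]
    simp only [Matrix.conjTranspose_apply, Matrix.of_apply, hstar]
    by_cases hyy : y = y'
    · subst hyy
      have : ∀ x : X, e (Sum.inl x) (Sum.inr y) * e (Sum.inl x) (Sum.inr y)
          = e (Sum.inl x) (Sum.inr y) := fun x => hidem _ _
      rw [Finset.sum_congr rfl fun x _ => this x]
      rw [Finset.sum_congr rfl fun x _ => hswap x y, hrowR, Matrix.one_apply_eq]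
    · rw [Matrix.one_apply_ne hyy]
      apply Finset.sum_eq_zero
      intro x _
      exact horth _ _ _ (fun h => hyy (by injection h))
end
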